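/- Let f be an admissible function on ℝ² with ∫_{ℝ²} f dx = M > 0, let β ∈ ℝ, and for λ > 0 set f_λ(x) = λ^{-2} f(λ^{-1} x). Then the attractive free energy satisfies the exact scaling identity F⁻_β[f_λ] = F⁻_β[f] + 2M(M/(8π) − 1) log λ + β ∫_{ℝ²} (V(λ x) − V(x)) f(x) dx; in particular, if M > 8π then F⁻_β[f_λ] → −∞ as λ → 0⁺. -/

import Mathlib

open MeasureTheory Real Filter

noncomputable section

/-- The Euclidean plane ℝ². -/
abbrev E2 := EuclideanSpace ℝ (Fin 2)

/-- The probability density μ(x) = 1/(π (1+|x|²)²) on ℝ². -/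
def mu2 (x : E2) : ℝ := 1 / (π * (1 + ‖x‖ ^ 2) ^ 2)

/-- The external potential V(x) = −log μ(x) = 2 log(1+|x|²) + log π. -/
def Vpot (x : E2) : ℝ := 2 * Real.log (1 + ‖x‖ ^ 2) + Real.log π

/-- A function f on ℝ² is admissible if it is measurable, nonnegative a.e., integrable,
and ∫ f |log f|, ∫ V f and ∬ f(x) f(y) |log|x−y|| are all finite. -/
def Admissible (f : E2 → ℝ) : Prop :=
  Measurable f ∧ (∀ᵐ x : E2, 0 ≤ f x) ∧ Integrable f ∧
  Integrable (fun x => f x * |Real.log (f x)|) ∧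
  Integrable (fun x => Vpot x * f x) ∧
  Integrable (fun p : E2 × E2 => f p.1 * f p.2 * |Real.log ‖p.1 - p.2‖|)

/-- The repulsive free energy F⁺_β. -/
def Fplus (β : ℝ) (f : E2 → ℝ) : ℝ :=
  (∫ x, f x * Real.log (f x)) + β * (∫ x, Vpot x * f x)
    - (1 / (4 * π)) * ∫ p : E2 × E2, f p.1 * f p.2 * Real.log ‖p.1 - p.2‖

/-- The attractive free energy F⁻_β. -/
def Fminus (β : ℝ) (f : E2 → ℝ) : ℝ :=
  (∫ x, f x * Real.log (f x)) + β * (∫ x, Vpot x * f x)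
    + (1 / (4 * π)) * ∫ p : E2 × E2, f p.1 * f p.2 * Real.log ‖p.1 - p.2‖

instance : (volume : Measure (E2 × E2)).IsAddHaarMeasure :=
  Measure.prod.instIsAddHaarMeasure volume volume

lemma my_sub1 (lam : ℝ) (hlam : 0 < lam) (g : E2 → ℝ) :
    ∫ x, g (lam⁻¹ • x) = lam ^ 2 * ∫ x, g x := by
  rw [MeasureTheory.Measure.integral_comp_inv_smul_of_nonneg volume g hlam.le]
  simp [finrank_euclideanSpace_fin]

lemma my_sub2 (lam : ℝ) (hlam : 0 < lam) (g : E2 × E2 → ℝ) :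
    ∫ p : E2 × E2, g (lam⁻¹ • p) = lam ^ 4 * ∫ p, g p := by
  rw [MeasureTheory.Measure.integral_comp_inv_smul_of_nonneg volume g hlam.le]
  rw [Module.finrank_prod, finrank_euclideanSpace_fin]
  norm_num

lemma my_offdiag : ∀ᵐ p : E2 × E2, p.1 ≠ p.2 := by
  have hm : MeasurableSet {p : E2 × E2 | p.1 = p.2} := by
    have : {p : E2 × E2 | p.1 = p.2} = (fun p : E2 × E2 => p.1 - p.2) ⁻¹' {0} := by
      ext p; simp [sub_eq_zero]
    rw [this]
    exact (measurable_fst.sub measurable_snd) (measurableSet_singleton 0)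
  rw [ae_iff]
  simp only [not_not]
  rw [Measure.volume_eq_prod, Measure.prod_apply hm]
  have : ∀ x : E2, (volume : Measure E2) (Prod.mk x ⁻¹' {p : E2 × E2 | p.1 = p.2}) = 0 := by
    intro x
    have : Prod.mk x ⁻¹' {p : E2 × E2 | p.1 = p.2} = {x} := by
      ext y; simp [eq_comm]
    rw [this]; exact measure_singleton x
  simp [this]

lemma Vpot_nonneg (x : E2) : 0 ≤ Vpot x := by
  have h1 : (0:ℝ) ≤ Real.log (1 + ‖x‖ ^ 2) :=
    Real.log_nonneg (le_add_of_nonneg_right (by positivity))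
  have h2 : (0:ℝ) ≤ Real.log π := Real.log_nonneg (by linarith [Real.pi_gt_three])
  unfold Vpot; linarith

lemma Vpot_smul (lam : ℝ) (hlam : 0 < lam) (x : E2) :
    Vpot (lam • x) = 2 * Real.log (1 + lam ^ 2 * ‖x‖ ^ 2) + Real.log π := by
  unfold Vpot
  rw [norm_smul, Real.norm_eq_abs, abs_of_pos hlam, mul_pow]

lemma Vpot_smul_le (lam : ℝ) (hlam : 0 < lam) (x : E2) :
    Vpot (lam • x) ≤ 4 * |Real.log lam| + Vpot x := by
  rw [Vpot_smul lam hlam x]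
  unfold Vpot
  have ht : (0:ℝ) ≤ ‖x‖ ^ 2 := by positivity
  set t := ‖x‖ ^ 2 with htdef
  have hmax2 : lam ^ 2 ≤ max 1 (lam ^ 2) := le_max_right _ _
  have h1 : 1 + lam ^ 2 * t ≤ max 1 (lam ^ 2) * (1 + t) := by
    have h1a : (1:ℝ) ≤ max 1 (lam ^ 2) := le_max_left _ _
    have h1b : lam ^ 2 * t ≤ max 1 (lam ^ 2) * t := mul_le_mul_of_nonneg_right hmax2 ht
    nlinarith
  have h2 : Real.log (1 + lam ^ 2 * t) ≤ Real.log (max 1 (lam ^ 2) * (1 + t)) :=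
    Real.log_le_log (by positivity) h1
  have h3 : Real.log (max 1 (lam ^ 2) * (1 + t))
      = Real.log (max 1 (lam ^ 2)) + Real.log (1 + t) :=
    Real.log_mul (by positivity) (by positivity)
  have h4 : Real.log (max 1 (lam ^ 2)) ≤ 2 * |Real.log lam| := by
    rcases le_total (lam ^ 2) 1 with h | h
    · rw [max_eq_left h, Real.log_one]
      positivity
    · rw [max_eq_right h, Real.log_pow]
      push_cast
      have := le_abs_self (Real.log lam)
      linarith
  rw [h3] at h2
  linarith

lemma Vpot_smul_le_one (lam : ℝ) (hlam : 0 < lam) (hlam1 : lam ≤ 1) (x : E2) :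
    |Vpot (lam • x) - Vpot x| ≤ Vpot x := by
  rw [Vpot_smul lam hlam x]
  unfold Vpot
  have ht : (0:ℝ) ≤ ‖x‖ ^ 2 := by positivity
  set t := ‖x‖ ^ 2 with htdef
  have h0 : (0:ℝ) ≤ Real.log (1 + lam ^ 2 * t) := Real.log_nonneg (by nlinarith)
  have hl2 : lam ^ 2 ≤ 1 := by nlinarith
  have h1 : Real.log (1 + lam ^ 2 * t) ≤ Real.log (1 + t) := by
    apply Real.log_le_log (by positivity)
    nlinarith [mul_le_mul_of_nonneg_right hl2 ht]
  have h2 : (0:ℝ) ≤ Real.log π := Real.log_nonneg (by linarith [Real.pi_gt_three])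
  have h3 : (0:ℝ) ≤ Real.log (1 + t) := Real.log_nonneg (by linarith)
  rw [abs_le]
  constructor <;> nlinarith

lemma measurable_Vpot : Measurable Vpot := by
  unfold Vpot
  exact ((Real.measurable_log.comp
    ((measurable_const.add (measurable_norm.pow_const 2)))).const_mul 2).add_const _

section Main

variable {β M : ℝ} {f : E2 → ℝ}

lemma entropy_int (hf : Admissible f) :
    Integrable (fun x => f x * Real.log (f x)) := by
  apply hf.2.2.2.1.mono'
    ((hf.1.mul (Real.measurable_log.comp hf.1)).aestronglyMeasurable)
  filter_upwards [hf.2.1] with x hx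
  simp only [Function.comp_apply, Pi.mul_apply, Real.norm_eq_abs, abs_mul, abs_of_nonneg hx]
  exact le_refl _

lemma inter_int (hf : Admissible f) :
    Integrable (fun p : E2 × E2 => f p.1 * f p.2 * Real.log ‖p.1 - p.2‖) := by
  apply hf.2.2.2.2.2.mono'
    (((hf.1.comp measurable_fst).mul (hf.1.comp measurable_snd)).mul
      (Real.measurable_log.comp ((measurable_fst.sub measurable_snd).norm))).aestronglyMeasurable
  have h1 : ∀ᵐ p : E2 × E2, 0 ≤ f p.1 := by
    rw [Measure.volume_eq_prod]
    exact Measure.quasiMeasurePreserving_fst.tendsto_ae.eventually hf.2.1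
  have h2 : ∀ᵐ p : E2 × E2, 0 ≤ f p.2 := by
    rw [Measure.volume_eq_prod]
    exact Measure.quasiMeasurePreserving_snd.tendsto_ae.eventually hf.2.1
  filter_upwards [h1, h2] with p hp1 hp2
  simp only [Function.comp_apply, Pi.mul_apply, Real.norm_eq_abs, abs_mul,
    abs_of_nonneg hp1, abs_of_nonneg hp2]
  exact le_refl _

lemma prodf_int (hf : Admissible f) :
    Integrable (fun p : E2 × E2 => f p.1 * f p.2) := by
  rw [Measure.volume_eq_prod]
  exact hf.2.2.1.mul_prod hf.2.2.1

lemma Vlam_int (hf : Admissible f) (lam : ℝ) (hlam : 0 < lam) :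
    Integrable (fun x => Vpot (lam • x) * f x) := by
  apply Integrable.mono' (((hf.2.2.1.const_mul (4 * |Real.log lam|))).add hf.2.2.2.2.1)
    ((measurable_Vpot.comp (measurable_const_smul lam)).mul hf.1).aestronglyMeasurable
  filter_upwards [hf.2.1] with x hx
  have h0 : 0 ≤ Vpot (lam • x) := Vpot_nonneg _
  simp only [Function.comp_apply, Pi.mul_apply, Real.norm_eq_abs, Pi.add_apply, abs_mul,
    abs_of_nonneg h0, abs_of_nonneg hx]
  have := Vpot_smul_le lam hlam x
  nlinarith [Vpot_nonneg x]

lemma Vdiff_int (hf : Admissible f) (lam : ℝ) (hlam : 0 < lam) :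
    Integrable (fun x => (Vpot (lam • x) - Vpot x) * f x) := by
  have := (Vlam_int hf lam hlam).sub hf.2.2.2.2.1
  simpa [sub_mul, Pi.sub_def] using this

lemma key_identity (hM : 0 < M) (hf : Admissible f) (hmass : ∫ x, f x = M)
    (lam : ℝ) (hlam : 0 < lam) :
    Fminus β (fun x => lam ^ (-2 : ℤ) * f (lam⁻¹ • x)) =
      Fminus β f + 2 * M * (M / (8 * π) - 1) * Real.log lam
        + β * ∫ x, (Vpot (lam • x) - Vpot x) * f x := by
  have hlam2 : (lam ^ 2)⁻¹ ≠ 0 := inv_ne_zero (pow_ne_zero _ hlam.ne')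
  have hz : (fun x : E2 => lam ^ (-2 : ℤ) * f (lam⁻¹ • x))
      = fun x => (lam ^ 2)⁻¹ * f (lam⁻¹ • x) := by
    funext x
    rw [zpow_neg, zpow_two, ← pow_two]
  rw [hz]
  -- entropy term
  have hE : ∫ x, ((lam ^ 2)⁻¹ * f (lam⁻¹ • x)) * Real.log ((lam ^ 2)⁻¹ * f (lam⁻¹ • x))
      = (∫ x, f x * Real.log (f x)) - 2 * M * Real.log lam := by
    have s1 : (∫ x, (lam ^ 2)⁻¹ * (f (lam⁻¹ • x) * Real.log ((lam ^ 2)⁻¹ * f (lam⁻¹ • x))))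
        = lam ^ 2 * ∫ y, (lam ^ 2)⁻¹ * (f y * Real.log ((lam ^ 2)⁻¹ * f y)) :=
      my_sub1 lam hlam (fun y => (lam ^ 2)⁻¹ * (f y * Real.log ((lam ^ 2)⁻¹ * f y)))
    calc ∫ x, ((lam ^ 2)⁻¹ * f (lam⁻¹ • x)) * Real.log ((lam ^ 2)⁻¹ * f (lam⁻¹ • x))
        = ∫ x, (lam ^ 2)⁻¹ * (f (lam⁻¹ • x) * Real.log ((lam ^ 2)⁻¹ * f (lam⁻¹ • x))) := by
          simp_rw [mul_assoc]
      _ = lam ^ 2 * ∫ y, (lam ^ 2)⁻¹ * (f y * Real.log ((lam ^ 2)⁻¹ * f y)) := s1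
      _ = ∫ y, f y * Real.log ((lam ^ 2)⁻¹ * f y) := by
          rw [integral_const_mul, ← mul_assoc, mul_inv_cancel₀ (pow_ne_zero _ hlam.ne'), one_mul]
      _ = ∫ y, (f y * Real.log (f y) + (-(2 * Real.log lam)) * f y) := by
          congr 1; funext y
          rcases eq_or_ne (f y) 0 with h | h
          · simp [h]
          · rw [Real.log_mul hlam2 h, Real.log_inv, Real.log_pow]
            push_cast; ring
      _ = (∫ x, f x * Real.log (f x)) - 2 * M * Real.log lam := by
          rw [integral_add (entropy_int hf) (hf.2.2.1.const_mul _), integral_const_mul, hmass]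
          ring
  -- potential term
  have hV : ∫ x, Vpot x * ((lam ^ 2)⁻¹ * f (lam⁻¹ • x))
      = (∫ x, Vpot x * f x) + ∫ x, (Vpot (lam • x) - Vpot x) * f x := by
    have s2 : (∫ x, (lam ^ 2)⁻¹ * (Vpot (lam • (lam⁻¹ • x)) * f (lam⁻¹ • x)))
        = lam ^ 2 * ∫ y, (lam ^ 2)⁻¹ * (Vpot (lam • y) * f y) :=
      my_sub1 lam hlam (fun y => (lam ^ 2)⁻¹ * (Vpot (lam • y) * f y))
    calc ∫ x, Vpot x * ((lam ^ 2)⁻¹ * f (lam⁻¹ • x))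
        = ∫ x, (lam ^ 2)⁻¹ * (Vpot (lam • (lam⁻¹ • x)) * f (lam⁻¹ • x)) := by
          congr 1; funext x
          rw [smul_inv_smul₀ hlam.ne']
          ring
      _ = lam ^ 2 * ∫ y, (lam ^ 2)⁻¹ * (Vpot (lam • y) * f y) := s2
      _ = ∫ y, Vpot (lam • y) * f y := by
          rw [integral_const_mul, ← mul_assoc, mul_inv_cancel₀ (pow_ne_zero _ hlam.ne'), one_mul]
      _ = (∫ x, Vpot x * f x) + ∫ x, (Vpot (lam • x) - Vpot x) * f x := by
          rw [← integral_add hf.2.2.2.2.1 (Vdiff_int hf lam hlam)]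
          congr 1; funext x; ring
  -- interaction term
  have hI : ∫ p : E2 × E2, ((lam ^ 2)⁻¹ * f (lam⁻¹ • p.1)) * ((lam ^ 2)⁻¹ * f (lam⁻¹ • p.2))
        * Real.log ‖p.1 - p.2‖
      = (∫ p : E2 × E2, f p.1 * f p.2 * Real.log ‖p.1 - p.2‖) + M ^ 2 * Real.log lam := by
    have s3 : (∫ p : E2 × E2, (lam ^ 2)⁻¹ * ((lam ^ 2)⁻¹ *
          (f (lam⁻¹ • p : E2 × E2).1 * f (lam⁻¹ • p : E2 × E2).2 *
            Real.log (lam * ‖(lam⁻¹ • p : E2 × E2).1 - (lam⁻¹ • p : E2 × E2).2‖))))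
        = lam ^ 4 * ∫ q : E2 × E2, (lam ^ 2)⁻¹ * ((lam ^ 2)⁻¹ *
            (f q.1 * f q.2 * Real.log (lam * ‖q.1 - q.2‖))) :=
      my_sub2 lam hlam (fun q : E2 × E2 => (lam ^ 2)⁻¹ * ((lam ^ 2)⁻¹ *
        (f q.1 * f q.2 * Real.log (lam * ‖q.1 - q.2‖))))
    calc ∫ p : E2 × E2, ((lam ^ 2)⁻¹ * f (lam⁻¹ • p.1)) * ((lam ^ 2)⁻¹ * f (lam⁻¹ • p.2))
            * Real.log ‖p.1 - p.2‖
        = ∫ p : E2 × E2, (lam ^ 2)⁻¹ * ((lam ^ 2)⁻¹ *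
            (f (lam⁻¹ • p : E2 × E2).1 * f (lam⁻¹ • p : E2 × E2).2 *
              Real.log (lam * ‖(lam⁻¹ • p : E2 × E2).1 - (lam⁻¹ • p : E2 × E2).2‖))) := by
          congr 1; funext p
          have hn : lam * ‖lam⁻¹ • p.1 - lam⁻¹ • p.2‖ = ‖p.1 - p.2‖ := by
            rw [← smul_sub, norm_smul, Real.norm_eq_abs, abs_of_pos (inv_pos.mpr hlam),
              ← mul_assoc, mul_inv_cancel₀ hlam.ne', one_mul]
          simp only [Prod.smul_fst, Prod.smul_snd]
          rw [hn]
          ring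
      _ = lam ^ 4 * ∫ q : E2 × E2, (lam ^ 2)⁻¹ * ((lam ^ 2)⁻¹ *
            (f q.1 * f q.2 * Real.log (lam * ‖q.1 - q.2‖))) := s3
      _ = ∫ q : E2 × E2, f q.1 * f q.2 * Real.log (lam * ‖q.1 - q.2‖) := by
          rw [integral_const_mul, integral_const_mul, ← mul_assoc, ← mul_assoc]
          have : lam ^ 4 * (lam ^ 2)⁻¹ * (lam ^ 2)⁻¹ = 1 := by
            field_simp
          rw [this, one_mul]
      _ = ∫ q : E2 × E2, (f q.1 * f q.2 * Real.log ‖q.1 - q.2‖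
            + Real.log lam * (f q.1 * f q.2)) := by
          apply integral_congr_ae
          filter_upwards [my_offdiag] with q hq
          have hnorm : ‖q.1 - q.2‖ ≠ 0 := by
            simp [sub_eq_zero, hq]
          rw [Real.log_mul hlam.ne' hnorm]
          ring
      _ = (∫ p : E2 × E2, f p.1 * f p.2 * Real.log ‖p.1 - p.2‖) + M ^ 2 * Real.log lam := by
          rw [integral_add (inter_int hf) ((prodf_int hf).const_mul _), integral_const_mul]
          have : ∫ p : E2 × E2, f p.1 * f p.2 = M ^ 2 := by
            rw [Measure.volume_eq_prod, integral_prod_mul, hmass]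
            ring
          rw [this]
          ring
  unfold Fminus
  rw [hE, hV, hI]
  have hpi : π ≠ 0 := Real.pi_ne_zero
  field_simp
  ring

end Main

/-- Exact scaling identity for the attractive free energy under f_λ(x) = λ⁻² f(λ⁻¹ x),
and divergence to −∞ as λ → 0⁺ when M > 8π. -/
theorem Fminus_scaling (β M : ℝ) (hM : 0 < M) (f : E2 → ℝ) (hf : Admissible f)
    (hmass : ∫ x, f x = M) :
    (∀ lam : ℝ, 0 < lam →
      Fminus β (fun x => lam ^ (-2 : ℤ) * f (lam⁻¹ • x)) =
        Fminus β f + 2 * M * (M / (8 * π) - 1) * Real.log lam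
          + β * ∫ x, (Vpot (lam • x) - Vpot x) * f x) ∧
    (8 * π < M →
      Tendsto (fun lam : ℝ => Fminus β (fun x => lam ^ (-2 : ℤ) * f (lam⁻¹ • x)))
        (nhdsWithin 0 (Set.Ioi 0)) atBot) := by
  constructor
  · intro lam hlam
    exact key_identity hM hf hmass lam hlam
  · intro hM8
    set c : ℝ := 2 * M * (M / (8 * π) - 1) with hc_def
    have hc : 0 < c := by
      have hpi : 0 < π := Real.pi_pos
      have h1 : 1 < M / (8 * π) := (one_lt_div (by positivity)).mpr hM8
      have : 0 < M / (8 * π) - 1 := by linarith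
      positivity
    set C : ℝ := Fminus β f + |β| * ∫ x, Vpot x * f x with hC_def
    have hmaj : Tendsto (fun lam : ℝ => C + c * Real.log lam) (nhdsWithin 0 (Set.Ioi 0)) atBot := by
      apply tendsto_atBot_add_const_left
      exact Tendsto.const_mul_atBot hc Real.tendsto_log_nhdsGT_zero
    apply tendsto_atBot_mono' _ _ hmaj
    filter_upwards [Ioo_mem_nhdsGT_of_mem (by norm_num : (0:ℝ) ∈ Set.Ico 0 1)] with lam hlam
    obtain ⟨hlam0, hlam1⟩ := hlam
    rw [key_identity hM hf hmass lam hlam0]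
    have hD : |∫ x, (Vpot (lam • x) - Vpot x) * f x| ≤ ∫ x, Vpot x * f x := by
      calc |∫ x, (Vpot (lam • x) - Vpot x) * f x|
          ≤ ∫ x, |(Vpot (lam • x) - Vpot x) * f x| := by
            simpa only [Real.norm_eq_abs] using
              norm_integral_le_integral_norm (fun x => (Vpot (lam • x) - Vpot x) * f x)
        _ ≤ ∫ x, Vpot x * f x := by
            apply integral_mono_ae (Vdiff_int hf lam hlam0).abs hf.2.2.2.2.1
            filter_upwards [hf.2.1] with x hx
            rw [abs_mul, abs_of_nonneg hx]
            exact mul_le_mul_of_nonneg_right (Vpot_smul_le_one lam hlam0 hlam1.le x) hx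
    have hbd : β * ∫ x, (Vpot (lam • x) - Vpot x) * f x ≤ |β| * ∫ x, Vpot x * f x := by
      calc β * ∫ x, (Vpot (lam • x) - Vpot x) * f x
          ≤ |β * ∫ x, (Vpot (lam • x) - Vpot x) * f x| := le_abs_self _
        _ = |β| * |∫ x, (Vpot (lam • x) - Vpot x) * f x| := abs_mul _ _
        _ ≤ |β| * ∫ x, Vpot x * f x := mul_le_mul_of_nonneg_left hD (abs_nonneg β)
    rw [hC_def, hc_def]
    linarith
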